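/- arXiv:2601.21529 — 3 statements merged into one kernel-verified Lean document; each statement's English description precedes it below -/
import Mathlib

section
/- Let κ > 0, D_in, D_out ≥ 1, and let W be a real D_out × (D_in + 1) matrix with Frobenius norm ‖W‖_F ≥ 1. Let x = (x₁, x̄) ∈ ℝ^{D_in+1} be a point on the hyperboloid L_κ^{D_in} (so x₁ = √(‖x̄‖_E² + 1/κ)), and define the Chen-layer output y = (y₁, ȳ) by ȳ = Wx and y₁ = √(‖Wx‖_E² + 1/κ). Then the increase in hyperbolic distance to the origin satisfies (1/√κ)·arccosh(√κ·y₁) − (1/√κ)·arccosh(√κ·x₁) ≤ (1/√κ)·(log 2 + log(√2·‖W‖_F)). In particular, if ‖W‖_F ≤ ‖W₀‖_F + n·δ for some initial matrix W₀, step bound δ > 0 and number of steps n, the increase is at most (1/√κ)·(log 2 + log √2 + log(‖W₀‖_F + n·δ)). -/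
/-- The Lorentz (Minkowski) inner product on ambient space `ℝ^{D+1}`:
`x ∘ y = −x₁y₁ + ⟨x̄, ȳ⟩_E`, where index `0` is the time coordinate. -/
noncomputable def lprod {D : ℕ} (x y : Fin (D + 1) → ℝ) : ℝ :=
  -(x 0 * y 0) + ∑ i : Fin D, x i.succ * y i.succ

/-- The hyperboloid (Lorentz model) of curvature `−κ`:
`L_κ^D = {z : z ∘ z = −1/κ, z₁ > 0}`. -/
noncomputable def onHyperboloid {D : ℕ} (κ : ℝ) (x : Fin (D + 1) → ℝ) : Prop :=
  lprod x x = -(1 / κ) ∧ 0 < x 0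

/-- The real inverse hyperbolic cosine, `arcosh t = log (t + √(t² − 1))`. -/
noncomputable def arcosh (t : ℝ) : ℝ := Real.log (t + Real.sqrt (t ^ 2 - 1))

/-- Geodesic distance in the Lorentz model:
`d(x, y) = (1/√κ)·arccosh(−κ(x ∘ y))`. -/
noncomputable def ldist {D : ℕ} (κ : ℝ) (x y : Fin (D + 1) → ℝ) : ℝ :=
  (1 / Real.sqrt κ) * arcosh (-(κ * lprod x y))

/-- The Euclidean norm of a vector in `ℝ^n`. -/
noncomputable def euclNorm {n : ℕ} (v : Fin n → ℝ) : ℝ := Real.sqrt (∑ j, v j ^ 2)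

/-- The Frobenius norm of a real matrix. -/
noncomputable def frobNorm {m n : ℕ} (W : Matrix (Fin m) (Fin n) ℝ) : ℝ :=
  Real.sqrt (∑ i, ∑ j, W i j ^ 2)

/-!
Write `t = √κ·x₁` and `s = √κ·y₁`; both are `≥ 1`. By Cauchy–Schwarz,
`‖Wx‖² ≤ ‖W‖_F²·‖x‖²`, and on the hyperboloid `‖x‖² = 2x₁² − 1/κ`, so `‖W‖_F ≥ 1` gives
`y₁ ≤ √2·‖W‖_F·x₁`, i.e. `s ≤ √2·‖W‖_F·t`. Since `log t ≤ arcosh t ≤ log (2t)`, the increase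
`arcosh s − arcosh t` is at most `log (2s) − log t ≤ log 2 + log (√2·‖W‖_F)`.
-/

open Real hiding arcosh
open Finset

lemma arcosh_le_log_two_mul {t : ℝ} (ht : 1 ≤ t) : arcosh t ≤ log (2 * t) := by
  have h : √(t ^ 2 - 1) ≤ t := (sqrt_le_sqrt (by linarith)).trans_eq (sqrt_sq (by linarith))
  exact log_le_log (add_pos_of_pos_of_nonneg (by linarith) (sqrt_nonneg _)) (by linarith)

lemma log_le_arcosh {t : ℝ} (ht : 1 ≤ t) : log t ≤ arcosh t :=
  log_le_log (by linarith) (le_add_of_nonneg_right (sqrt_nonneg _))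

lemma arcosh_sub_arcosh_le {s t a : ℝ} (hs : 1 ≤ s) (ht : 1 ≤ t) (hst : s ≤ a * t) :
    arcosh s - arcosh t ≤ log 2 + log a := by
  have ha : 0 < a := by nlinarith
  have h : log (2 * s) ≤ log 2 + log a + log t := by
    rw [← log_mul two_ne_zero ha.ne', ← log_mul (by positivity) (by linarith)]
    exact log_le_log (by linarith) (by linarith)
  linarith [arcosh_le_log_two_mul hs, log_le_arcosh ht]

lemma euclNorm_sq {n : ℕ} (v : Fin n → ℝ) : euclNorm v ^ 2 = ∑ j, v j ^ 2 :=
  sq_sqrt (sum_nonneg fun j _ => sq_nonneg (v j))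

lemma frobNorm_sq {m n : ℕ} (W : Matrix (Fin m) (Fin n) ℝ) :
    frobNorm W ^ 2 = ∑ i, ∑ j, W i j ^ 2 :=
  sq_sqrt (sum_nonneg fun i _ => sum_nonneg fun j _ => sq_nonneg (W i j))

lemma euclNorm_sq_eq_sq_add_tail {n : ℕ} (v : Fin (n + 1) → ℝ) :
    euclNorm v ^ 2 = v 0 ^ 2 + euclNorm (fun i : Fin n => v i.succ) ^ 2 := by
  rw [euclNorm_sq, euclNorm_sq, Fin.sum_univ_succ]

lemma euclNorm_mulVec_sq_le {m n : ℕ} (W : Matrix (Fin m) (Fin n) ℝ) (v : Fin n → ℝ) :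
    euclNorm (W.mulVec v) ^ 2 ≤ frobNorm W ^ 2 * euclNorm v ^ 2 := by
  rw [euclNorm_sq, euclNorm_sq, frobNorm_sq, sum_mul]
  exact sum_le_sum fun i _ => sum_mul_sq_le_sq_mul_sq univ (W i) v

lemma one_le_sqrt_mul_sqrt_add_inv {κ u : ℝ} (hκ : 0 < κ) (hu : 0 ≤ u) :
    1 ≤ √κ * √(u + 1 / κ) := by
  rw [← sqrt_mul hκ.le, mul_add, mul_one_div_cancel hκ.ne', one_le_sqrt]
  nlinarith

lemma sqrt_euclNorm_mulVec_sq_add_inv_le {κ : ℝ} (hκ : 0 < κ) {m n : ℕ}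
    (W : Matrix (Fin m) (Fin (n + 1)) ℝ) (hW : 1 ≤ frobNorm W) (x : Fin (n + 1) → ℝ)
    (hx : x 0 = √(euclNorm (fun i : Fin n => x i.succ) ^ 2 + 1 / κ)) :
    √(euclNorm (W.mulVec x) ^ 2 + 1 / κ) ≤ √2 * frobNorm W * x 0 := by
  have hx0 : 0 ≤ x 0 := hx ▸ sqrt_nonneg _
  have hx2 : x 0 ^ 2 = euclNorm (fun i : Fin n => x i.succ) ^ 2 + 1 / κ := by
    rw [hx, sq_sqrt (by positivity)]
  have hnorm : euclNorm x ^ 2 = 2 * x 0 ^ 2 - 1 / κ := by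
    rw [euclNorm_sq_eq_sq_add_tail]; linarith
  rw [sqrt_le_left (by positivity), mul_pow, mul_pow, sq_sqrt zero_le_two]
  calc euclNorm (W.mulVec x) ^ 2 + 1 / κ ≤ frobNorm W ^ 2 * (2 * x 0 ^ 2 - 1 / κ) + 1 / κ := by
        rw [← hnorm]; exact add_le_add_left (euclNorm_mulVec_sq_le W x) _
    _ = 2 * frobNorm W ^ 2 * x 0 ^ 2 - (frobNorm W ^ 2 - 1) * (1 / κ) := by ring
    _ ≤ 2 * frobNorm W ^ 2 * x 0 ^ 2 :=
        sub_le_self _ (mul_nonneg (by nlinarith) (by positivity))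

theorem chen_layer_log_bound_general (κ : ℝ) (hκ : 0 < κ) (Din Dout : ℕ)
    (W : Matrix (Fin Dout) (Fin (Din + 1)) ℝ) (hW : 1 ≤ frobNorm W)
    (x : Fin (Din + 1) → ℝ)
    (hx : x 0 = Real.sqrt (euclNorm (fun i : Fin Din => x i.succ) ^ 2 + 1 / κ))
    (y1 : ℝ) (hy1 : y1 = Real.sqrt (euclNorm (W.mulVec x) ^ 2 + 1 / κ)) :
    (1 / Real.sqrt κ) * arcosh (Real.sqrt κ * y1)
        - (1 / Real.sqrt κ) * arcosh (Real.sqrt κ * x 0)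
      ≤ (1 / Real.sqrt κ) * (Real.log 2 + Real.log (Real.sqrt 2 * frobNorm W)) ∧
    ∀ (W0 : Matrix (Fin Dout) (Fin (Din + 1)) ℝ) (δ : ℝ) (n : ℕ), 0 < δ →
      frobNorm W ≤ frobNorm W0 + n * δ →
      (1 / Real.sqrt κ) * arcosh (Real.sqrt κ * y1)
          - (1 / Real.sqrt κ) * arcosh (Real.sqrt κ * x 0)
        ≤ (1 / Real.sqrt κ) *
            (Real.log 2 + Real.log (Real.sqrt 2) + Real.log (frobNorm W0 + n * δ)) := by
  have hs : 1 ≤ √κ * y1 := hy1 ▸ one_le_sqrt_mul_sqrt_add_inv hκ (sq_nonneg _)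
  have ht : 1 ≤ √κ * x 0 := by rw [hx]; exact one_le_sqrt_mul_sqrt_add_inv hκ (sq_nonneg _)
  have hst : √κ * y1 ≤ √2 * frobNorm W * (√κ * x 0) := by
    rw [mul_left_comm]
    exact mul_le_mul_of_nonneg_left
      (hy1 ▸ sqrt_euclNorm_mulVec_sq_add_inv_le hκ W hW x hx) (sqrt_nonneg κ)
  have hbound := arcosh_sub_arcosh_le hs ht hst
  rw [← mul_sub]
  refine ⟨mul_le_mul_of_nonneg_left hbound (by positivity), fun W0 δ n _ hWn => ?_⟩
  refine mul_le_mul_of_nonneg_left (hbound.trans ?_) (by positivity)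
  have hF : 0 < frobNorm W := by linarith
  rw [log_mul (by positivity) hF.ne', ← add_assoc]
  gcongr

/-- For the Chen layer `x ↦ (√(‖Wx‖² + 1/κ), Wx)` with `‖W‖_F ≥ 1`, the
increase of hyperbolic distance to the origin is at most
`(1/√κ)·(log 2 + log(√2·‖W‖_F))`; in particular, if `‖W‖_F ≤ ‖W₀‖_F + n·δ`, then it is at
most `(1/√κ)·(log 2 + log √2 + log(‖W₀‖_F + n·δ))`. -/
theorem chen_layer_log_bound (κ : ℝ) (hκ : 0 < κ) (Din Dout : ℕ)
    (hDin : 1 ≤ Din) (hDout : 1 ≤ Dout)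
    (W : Matrix (Fin Dout) (Fin (Din + 1)) ℝ) (hW : 1 ≤ frobNorm W)
    (x : Fin (Din + 1) → ℝ)
    (hx : x 0 = Real.sqrt (euclNorm (fun i : Fin Din => x i.succ) ^ 2 + 1 / κ))
    (y1 : ℝ) (hy1 : y1 = Real.sqrt (euclNorm (W.mulVec x) ^ 2 + 1 / κ)) :
    (1 / Real.sqrt κ) * arcosh (Real.sqrt κ * y1)
        - (1 / Real.sqrt κ) * arcosh (Real.sqrt κ * x 0)
      ≤ (1 / Real.sqrt κ) * (Real.log 2 + Real.log (Real.sqrt 2 * frobNorm W)) ∧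
    ∀ (W0 : Matrix (Fin Dout) (Fin (Din + 1)) ℝ) (δ : ℝ) (n : ℕ), 0 < δ →
      frobNorm W ≤ frobNorm W0 + n * δ →
      (1 / Real.sqrt κ) * arcosh (Real.sqrt κ * y1)
          - (1 / Real.sqrt κ) * arcosh (Real.sqrt κ * x 0)
        ≤ (1 / Real.sqrt κ) *
            (Real.log 2 + Real.log (Real.sqrt 2) + Real.log (frobNorm W0 + n * δ)) :=
  chen_layer_log_bound_general κ hκ Din Dout W hW x hx y1 hy1
end

section
/- Let κ > 0, let x ∈ L_κ^D, and let v ∈ ℝ^{D+1} be spacelike, i.e. v ∘ v > 0. Let H = {z ∈ L_κ^D : z ∘ v = 0}. Then the value (1/√κ)·arcsinh(√κ·|x ∘ v| / √(v ∘ v)) is the least element of the set of distances {d(x, z) : z ∈ H}; that is, d(x, z) ≥ (1/√κ)·arcsinh(√κ·|x ∘ v| / √(v ∘ v)) for all z ∈ H, and equality is attained by some point of H. -/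
/-!
Let `w = x - (x ∘ v / v ∘ v) • v` be the Lorentz-orthogonal projection of `x` onto `v^⊥`. Then
`x ∘ z = w ∘ z` for every `z ∈ H`, and `w` is a future timelike vector with
`-κ (w ∘ w) = 1 + κ (x ∘ v)² / (v ∘ v)`. By the reverse Cauchy–Schwarz inequality for future
timelike vectors, `-κ (w ∘ z) ≥ √(-κ (w ∘ w))` for all `z` on the hyperboloid, with equality at
the normalisation of `w`, which lies in `H`. Finally `arcosh √(1 + t²) = arsinh t` for `t ≥ 0`.
-/

lemma sub_mul_sub_le_sq_sub_mul {a b S P Q : ℝ} (hS : S ^ 2 ≤ P * Q) (hP : 0 ≤ P)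
    (hQ : 0 ≤ Q) (ha : P < a ^ 2) (hb : Q < b ^ 2) :
    (P - a ^ 2) * (Q - b ^ 2) ≤ (S - a * b) ^ 2 := by
  obtain ⟨p, hp, rfl⟩ : ∃ p, 0 ≤ p ∧ P = p ^ 2 := ⟨√P, Real.sqrt_nonneg _, (Real.sq_sqrt hP).symm⟩
  obtain ⟨q, hq, rfl⟩ : ∃ q, 0 ≤ q ∧ Q = q ^ 2 := ⟨√Q, Real.sqrt_nonneg _, (Real.sq_sqrt hQ).symm⟩
  have hpa : p < |a| := by simpa [abs_of_nonneg hp] using sq_lt_sq.1 ha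
  have hqb : q < |b| := by simpa [abs_of_nonneg hq] using sq_lt_sq.1 hb
  have hSpq : |S| ≤ p * q := by
    simpa [abs_of_nonneg (mul_nonneg hp hq)] using sq_le_sq.1 (hS.trans_eq (mul_pow p q 2).symm)
  have hpq : p * q ≤ |a * b| := by
    rw [abs_mul]; exact mul_le_mul hpa.le hqb.le hq (abs_nonneg a)
  have hab : |a * b| - |S| ≤ |S - a * b| := by
    rw [abs_sub_comm]; exact abs_sub_abs_le_abs_sub _ _
  -- `(|ab| - pq)² - (a² - p²)(b² - q²) = (|a|q - |b|p)²`
  nlinarith [sq_nonneg (|a| * q - |b| * p), sq_abs a, sq_abs b, abs_mul a b, abs_nonneg S,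
    sq_abs (S - a * b)]

lemma neg_add_neg_iff_of_sq_lt_sq {S c : ℝ} (h : S ^ 2 < c ^ 2) : -c + S < 0 ↔ 0 < c := by
  have h' : |S| < |c| := sq_lt_sq.1 h
  rcases le_or_gt c 0 with hc | hc
  · rw [abs_of_nonpos hc] at h'
    constructor <;> intro <;> linarith [neg_abs_le S]
  · rw [abs_of_pos hc] at h'
    constructor <;> intro <;> linarith [le_abs_self S]

lemma Real.arsinh_eq_arcosh_sqrt {t : ℝ} (ht : 0 ≤ t) :
    Real.arsinh t = Real.arcosh √(1 + t ^ 2) := by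
  rw [← Real.cosh_arsinh, Real.arcosh_cosh (Real.arsinh_nonneg_iff.2 ht)]

section LorentzAlgebra

variable {D : ℕ}

lemma lprod_comm (x y : Fin (D + 1) → ℝ) : lprod x y = lprod y x := by
  simp only [lprod, mul_comm]

lemma lprod_sub_left (x y z : Fin (D + 1) → ℝ) : lprod (x - y) z = lprod x z - lprod y z := by
  simp only [lprod, Pi.sub_apply, sub_mul, Finset.sum_sub_distrib]
  ring

lemma lprod_smul_left (t : ℝ) (x y : Fin (D + 1) → ℝ) : lprod (t • x) y = t * lprod x y := by
  simp only [lprod, Pi.smul_apply, smul_eq_mul, mul_assoc, ← Finset.mul_sum]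
  ring

lemma lprod_smul_right (t : ℝ) (x y : Fin (D + 1) → ℝ) : lprod x (t • y) = t * lprod x y := by
  rw [lprod_comm, lprod_smul_left, lprod_comm]

lemma lprod_self (x : Fin (D + 1) → ℝ) : lprod x x = -(x 0 ^ 2) + ∑ i : Fin D, x i.succ ^ 2 := by
  simp only [lprod, sq]

end LorentzAlgebra

section Timelike

variable {D : ℕ} {w z : Fin (D + 1) → ℝ}

lemma spatial_sq_lt_of_timelike (hw : lprod w w < 0) : ∑ i : Fin D, w i.succ ^ 2 < w 0 ^ 2 := by
  rw [lprod_self] at hw; linarith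

lemma spatial_inner_sq_lt_of_timelike (hw : lprod w w < 0) (hz : lprod z z < 0) :
    (∑ i : Fin D, w i.succ * z i.succ) ^ 2 < (w 0 * z 0) ^ 2 :=
  calc (∑ i : Fin D, w i.succ * z i.succ) ^ 2
      ≤ (∑ i : Fin D, w i.succ ^ 2) * ∑ i : Fin D, z i.succ ^ 2 :=
        Finset.sum_mul_sq_le_sq_mul_sq _ _ _
    _ < w 0 ^ 2 * z 0 ^ 2 :=
        mul_lt_mul'' (spatial_sq_lt_of_timelike hw) (spatial_sq_lt_of_timelike hz)
          (Finset.sum_nonneg fun _ _ => sq_nonneg _) (Finset.sum_nonneg fun _ _ => sq_nonneg _)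
    _ = (w 0 * z 0) ^ 2 := (mul_pow _ _ _).symm

lemma lprod_neg_iff_of_timelike (hw : lprod w w < 0) (hz : lprod z z < 0) :
    lprod w z < 0 ↔ 0 < w 0 * z 0 :=
  neg_add_neg_iff_of_sq_lt_sq (spatial_inner_sq_lt_of_timelike hw hz)

lemma lprod_mul_le_sq_of_timelike (hw : lprod w w < 0) (hz : lprod z z < 0) :
    lprod w w * lprod z z ≤ lprod w z ^ 2 := by
  have h := sub_mul_sub_le_sq_sub_mul (Finset.sum_mul_sq_le_sq_mul_sq Finset.univ
    (fun i : Fin D => w i.succ) (fun i => z i.succ)) (Finset.sum_nonneg fun _ _ => sq_nonneg _)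
    (Finset.sum_nonneg fun _ _ => sq_nonneg _) (spatial_sq_lt_of_timelike hw)
    (spatial_sq_lt_of_timelike hz)
  rw [lprod_self, lprod_self, lprod]
  convert h using 1 <;> ring

-- The reverse Cauchy–Schwarz inequality.
lemma lprod_le_neg_sqrt_of_future (hw : lprod w w < 0) (hz : lprod z z < 0) (hw0 : 0 < w 0)
    (hz0 : 0 < z 0) : lprod w z ≤ -√(lprod w w * lprod z z) := by
  have hneg : lprod w z < 0 := (lprod_neg_iff_of_timelike hw hz).2 (mul_pos hw0 hz0)
  calc lprod w z = -√(lprod w z ^ 2) := by rw [Real.sqrt_sq_eq_abs, abs_of_neg hneg, neg_neg]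
    _ ≤ -√(lprod w w * lprod z z) :=
        neg_le_neg (Real.sqrt_le_sqrt (lprod_mul_le_sq_of_timelike hw hz))

end Timelike

lemma ldist_eq_arcosh {D : ℕ} (κ : ℝ) (x y : Fin (D + 1) → ℝ) :
    ldist κ x y = 1 / √κ * Real.arcosh (-(κ * lprod x y)) :=
  rfl

section Hyperboloid

variable {D : ℕ} {κ : ℝ} {w z : Fin (D + 1) → ℝ}

lemma sqrt_neg_mul_lprod_self_le (hκ : 0 < κ) (hw : lprod w w < 0) (hw0 : 0 < w 0)
    (hz : onHyperboloid κ z) : √(-(κ * lprod w w)) ≤ -(κ * lprod w z) := by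
  obtain ⟨hzz, hz0⟩ := hz
  have hz_timelike : lprod z z < 0 := by rw [hzz]; exact neg_neg_of_pos (by positivity)
  have hCS := lprod_le_neg_sqrt_of_future hw hz_timelike hw0 hz0
  have hprod : lprod w w * lprod z z = -(κ * lprod w w) / κ ^ 2 := by
    rw [hzz]; field_simp
  rw [hprod, Real.sqrt_div' _ (sq_nonneg κ), Real.sqrt_sq hκ.le] at hCS
  have := mul_le_mul_of_nonneg_left hCS hκ.le
  rw [mul_neg, mul_div_cancel₀ _ hκ.ne'] at this
  linarith

lemma onHyperboloid_inv_sqrt_smul (hκ : 0 < κ) (hw : lprod w w < 0) (hw0 : 0 < w 0) :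
    onHyperboloid κ ((√(-(κ * lprod w w)))⁻¹ • w) := by
  have hpos : 0 < -(κ * lprod w w) := by nlinarith
  have hs := Real.sq_sqrt hpos.le
  refine ⟨?_, mul_pos (inv_pos.2 (Real.sqrt_pos.2 hpos)) hw0⟩
  rw [lprod_smul_left, lprod_smul_right]
  field_simp
  linear_combination hs

lemma neg_mul_lprod_inv_sqrt_smul (hκ : 0 < κ) (hw : lprod w w < 0) :
    -(κ * lprod w ((√(-(κ * lprod w w)))⁻¹ • w)) = √(-(κ * lprod w w)) := by
  have hpos : 0 < -(κ * lprod w w) := by nlinarith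
  have hs := Real.sq_sqrt hpos.le
  have hs0 := (Real.sqrt_pos.2 hpos).ne'
  rw [lprod_smul_right]
  field_simp
  linear_combination -hs

end Hyperboloid

theorem dist_to_lorentz_hyperplane_general (D : ℕ) (κ : ℝ) (hκ : 0 < κ)
    (x : Fin (D + 1) → ℝ) (hx : onHyperboloid κ x)
    (v : Fin (D + 1) → ℝ) (hv : 0 < lprod v v) :
    IsLeast {r : ℝ | ∃ z : Fin (D + 1) → ℝ, onHyperboloid κ z ∧ lprod z v = 0 ∧
        r = ldist κ x z}
      ((1 / Real.sqrt κ) *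
        Real.arsinh (Real.sqrt κ * |lprod x v| / Real.sqrt (lprod v v))) := by
  obtain ⟨hxx, hx0⟩ := hx
  set w := x - (lprod x v / lprod v v) • v
  have hxz : ∀ z, lprod z v = 0 → lprod x z = lprod w z := fun z hzv => by
    rw [lprod_sub_left, lprod_smul_left, lprod_comm v z, hzv, mul_zero, sub_zero]
  have hwv : lprod w v = 0 := by
    rw [lprod_sub_left, lprod_smul_left, div_mul_cancel₀ _ hv.ne', sub_self]
  have hww : -(κ * lprod w w) = 1 + (√κ * |lprod x v| / √(lprod v v)) ^ 2 := by
    rw [← hxz w hwv, lprod_comm, lprod_sub_left, lprod_smul_left, hxx, lprod_comm v x, div_pow,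
      mul_pow, Real.sq_sqrt hκ.le, Real.sq_sqrt hv.le, sq_abs]
    field_simp
    ring
  have hw : lprod w w < 0 := by nlinarith [sq_nonneg (√κ * |lprod x v| / √(lprod v v))]
  have hw0 : 0 < w 0 := by
    have hwx : lprod w x < 0 := by rwa [lprod_comm, hxz w hwv]
    have hx : lprod x x < 0 := by rw [hxx]; exact neg_neg_of_pos (by positivity)
    exact pos_of_mul_pos_left ((lprod_neg_iff_of_timelike hw hx).1 hwx) hx0.le
  rw [Real.arsinh_eq_arcosh_sqrt (by positivity), ← hww]
  have hw'v : lprod ((√(-(κ * lprod w w)))⁻¹ • w) v = 0 := by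
    rw [lprod_smul_left, hwv, mul_zero]
  refine ⟨⟨_, onHyperboloid_inv_sqrt_smul hκ hw hw0, hw'v, ?_⟩, ?_⟩
  · rw [ldist_eq_arcosh, hxz _ hw'v, neg_mul_lprod_inv_sqrt_smul hκ hw]
  · rintro _ ⟨z, hz, hzv, rfl⟩
    have hle := sqrt_neg_mul_lprod_self_le hκ hw hw0 hz
    have hpos : 0 < √(-(κ * lprod w w)) := Real.sqrt_pos.2 (by rw [hww]; positivity)
    rw [ldist_eq_arcosh, hxz z hzv]
    exact mul_le_mul_of_nonneg_left ((Real.arcosh_le_arcosh hpos (hpos.trans_le hle)).2 hle)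
      (by positivity)

/-- For `x ∈ L_κ^D` and spacelike `v` (`v ∘ v > 0`), the value
`(1/√κ)·arcsinh(√κ·|x ∘ v|/√(v ∘ v))` is the least element of the set of distances from `x`
to points of the hyperplane `H = {z ∈ L_κ^D : z ∘ v = 0}`. -/
theorem dist_to_lorentz_hyperplane (D : ℕ) (hD : 1 ≤ D) (κ : ℝ) (hκ : 0 < κ)
    (x : Fin (D + 1) → ℝ) (hx : onHyperboloid κ x)
    (v : Fin (D + 1) → ℝ) (hv : 0 < lprod v v) :
    IsLeast {r : ℝ | ∃ z : Fin (D + 1) → ℝ, onHyperboloid κ z ∧ lprod z v = 0 ∧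
        r = ldist κ x z}
      ((1 / Real.sqrt κ) *
        Real.arsinh (Real.sqrt κ * |lprod x v| / Real.sqrt (lprod v v))) :=
  dist_to_lorentz_hyperplane_general D κ hκ x hx v hv
end

section
/- Let h : ℝ → ℝ be continuous at x ∈ ℝ. Then, as κ → 0⁺ (along the filter of positive reals tending to 0), the Lorentzian activation h_{Lorentzian,κ}(x) = (1/√κ)·arcsinh(√κ·h((1/√κ)·sinh(√κ·x))) tends to h(x). -/
open Filter Topology

/-- Since `φ u = u * dslope φ 0 u` and `dslope φ 0` is continuous at `0` with value `c`,
`t⁻¹ * φ (t * z)` is `z * dslope φ 0 (t * z)`. -/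
theorem HasDerivAt.tendsto_inv_mul_comp_mul {α : Type*} {l : Filter α} {φ : ℝ → ℝ} {c z₀ : ℝ}
    {t z : α → ℝ} (hφ : HasDerivAt φ c 0) (hφ0 : φ 0 = 0) (ht : Tendsto t l (𝓝 0))
    (ht0 : ∀ᶠ a in l, t a ≠ 0) (hz : Tendsto z l (𝓝 z₀)) :
    Tendsto (fun a => (t a)⁻¹ * φ (t a * z a)) l (𝓝 (z₀ * c)) := by
  have hdslope : Tendsto (dslope φ 0) (𝓝 0) (𝓝 c) := by
    simpa only [dslope_same, hφ.deriv] using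
      (continuousAt_dslope_same.2 hφ.differentiableAt).tendsto
  have hprod : Tendsto (fun a => t a * z a) l (𝓝 0) := by
    simpa only [zero_mul] using ht.mul hz
  refine (hz.mul (hdslope.comp hprod)).congr' ?_
  filter_upwards [ht0] with a ha
  have hsplit := sub_smul_dslope φ 0 (t a * z a)
  rw [sub_zero, hφ0, sub_zero, smul_eq_mul] at hsplit
  rw [Function.comp_apply, ← hsplit]
  field_simp

/-- If `h : ℝ → ℝ` is continuous at `x`, then as `κ → 0⁺` the Lorentzian
activation `(1/√κ)·arcsinh(√κ·h((1/√κ)·sinh(√κ·x)))` tends to `h x`. -/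
theorem lorentzian_activation_limit (h : ℝ → ℝ) (x : ℝ) (hcont : ContinuousAt h x) :
    Filter.Tendsto
      (fun κ : ℝ =>
        (1 / Real.sqrt κ) *
          Real.arsinh (Real.sqrt κ * h ((1 / Real.sqrt κ) * Real.sinh (Real.sqrt κ * x))))
      (nhdsWithin 0 (Set.Ioi 0)) (nhds (h x)) := by
  have hsqrt : Tendsto Real.sqrt (𝓝[>] 0) (𝓝 0) := by
    simpa only [Real.sqrt_zero] using
      (Real.continuous_sqrt.tendsto 0).mono_left nhdsWithin_le_nhds
  have hsqrt_ne : ∀ᶠ κ in 𝓝[>] (0 : ℝ), Real.sqrt κ ≠ 0 := by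
    filter_upwards [self_mem_nhdsWithin] with κ hκ
    exact (Real.sqrt_pos.2 hκ).ne'
  have hsinh : Tendsto (fun κ => (Real.sqrt κ)⁻¹ * Real.sinh (Real.sqrt κ * x)) (𝓝[>] 0) (𝓝 x) := by
    simpa using (Real.hasDerivAt_sinh 0).tendsto_inv_mul_comp_mul Real.sinh_zero hsqrt hsqrt_ne
      (tendsto_const_nhds (x := x))
  have harsinh := (Real.hasDerivAt_arsinh 0).tendsto_inv_mul_comp_mul Real.arsinh_zero hsqrt
    hsqrt_ne (hcont.tendsto.comp hsinh)
  simpa [one_div] using harsinh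
end
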